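/- Let s ≤ 0 be real and set ζ₁ = √(−s)/2. Then for all real u ≥ 0 and 0 ≤ v ≤ u, the point ζ = ζ₁ + u + iv satisfies Im( (4/3)ζ³ + sζ ) = v ( 4(ζ₁ + u)² + s − (4/3)v² ) ≥ (8/3) u² v, and the point ζ′ = ζ₁ + u − iv satisfies Im( (4/3)ζ′³ + sζ′ ) ≤ −(8/3) u² v. -/
import Mathlib


/-- The rescaled Painlevé phase `(4/3)ζ³ + sζ`. -/
noncomputable def pphase (s : ℝ) (ζ : ℂ) : ℂ := (4 / 3 : ℂ) * ζ ^ 3 + (s : ℂ) * ζ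

lemma pphase_im (s a v : ℝ) :
    (pphase s ((a : ℂ) + (v : ℂ) * Complex.I)).im
      = v * (4 * a ^ 2 + s - (4 / 3) * v ^ 2) := by
  simp [pphase, pow_succ, Complex.add_im, Complex.add_re, Complex.mul_im, Complex.mul_re]
  ring

/-- Sign estimates for the rescaled Painlevé phase `(4/3)ζ³ + sζ`, `s ≤ 0`, in the sector
`ζ = ζ₁ + u ± iv`, `0 ≤ v ≤ u`, where `ζ₁ = √(−s)/2` is the positive critical point. -/
theorem stmt19 (s : ℝ) (hs : s ≤ 0) :
    ∀ u v : ℝ, 0 ≤ u → 0 ≤ v → v ≤ u →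
      ((pphase s (((Real.sqrt (-s) / 2 + u : ℝ) : ℂ) + (v : ℂ) * Complex.I)).im
        = v * (4 * (Real.sqrt (-s) / 2 + u) ^ 2 + s - (4 / 3) * v ^ 2)) ∧
      ((8 / 3) * u ^ 2 * v
        ≤ (pphase s (((Real.sqrt (-s) / 2 + u : ℝ) : ℂ) + (v : ℂ) * Complex.I)).im) ∧
      ((pphase s (((Real.sqrt (-s) / 2 + u : ℝ) : ℂ) - (v : ℂ) * Complex.I)).im
        ≤ -((8 / 3) * u ^ 2 * v)) := by
  intro u v hu hv hvu
  have hsq : Real.sqrt (-s) ^ 2 = -s := Real.sq_sqrt (neg_nonneg.2 hs)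
  have hζ : 0 ≤ Real.sqrt (-s) := Real.sqrt_nonneg _
  have key : (8 / 3) * u ^ 2 * v
      ≤ v * (4 * (Real.sqrt (-s) / 2 + u) ^ 2 + s - (4 / 3) * v ^ 2) := by
    have expand : 4 * (Real.sqrt (-s) / 2 + u) ^ 2 + s - (4 / 3) * v ^ 2
        = 4 * Real.sqrt (-s) * u + 4 * u ^ 2 - (4 / 3) * v ^ 2 := by
      nlinarith [hsq]
    rw [expand]
    nlinarith [mul_nonneg hv (mul_nonneg hζ hu), mul_nonneg hv (mul_nonneg hv (sub_nonneg.2 hvu)), mul_nonneg hv (mul_nonneg hu (sub_nonneg.2 hvu))]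
  refine ⟨pphase_im _ _ _, (pphase_im _ _ _).symm ▸ key, ?_⟩
  have h2 : (pphase s (((Real.sqrt (-s) / 2 + u : ℝ) : ℂ) - (v : ℂ) * Complex.I)).im
      = -(v * (4 * (Real.sqrt (-s) / 2 + u) ^ 2 + s - (4 / 3) * v ^ 2)) := by
    have := pphase_im s (Real.sqrt (-s) / 2 + u) (-v)
    push_cast at this
    rw [show (((Real.sqrt (-s) / 2 + u : ℝ)) : ℂ) - (v : ℂ) * Complex.I
        = ((Real.sqrt (-s) / 2 + u : ℝ) : ℂ) + (-v : ℂ) * Complex.I by push_cast; ring]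
    push_cast
    rw [this]; ring
  rw [h2]
  linarith
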